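/- arXiv:2209.03602 — 3 statements merged into one kernel-verified Lean document; each statement's English description precedes it below -/
import Mathlib

section
/- Farkas' Lemma: let Φ be a satisfiable system of affine inequalities {a_{i,0} + Σⱼ a_{i,j} xⱼ ≥ 0 : i = 1,...,m} over ℝ^r. Then Φ entails an affine inequality c₀ + Σⱼ cⱼ xⱼ ≥ 0 if and only if there exist nonnegative reals y₀,...,y_m with c₀ = y₀ + Σᵢ yᵢ a_{i,0} and cⱼ = Σᵢ yᵢ a_{i,j} for each j = 1,...,r. -/
/-!
Since the system has a solution `x₀`, it entails `c₀ + c ⬝ᵥ x ≥ 0` iff the homogenized inequality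
`c₀ τ + c ⬝ᵥ z ≥ 0` holds whenever `τ ≥ 0` and `b i τ + A i ⬝ᵥ z ≥ 0` for all `i`: approximate
`(τ, z)` by the solutions `(ε x₀ + z) / (τ + ε)`. By the conic Farkas lemma, the homogenized
inequality holds iff `(c₀, c)` is a nonnegative combination of `(1, 0)` and the rows `(b i, A i)`.
The conic Farkas lemma is hyperplane separation from the cone spanned by finitely many vectors,
which is closed: by Carathéodory's reduction it is a finite union of cones spanned by linearly
independent vectors, i.e. of linear images of a closed orthant under closed embeddings.
-/

open Finset Matrix

section Cone

variable {ι E : Type*} [Fintype ι] [AddCommGroup E] [Module ℝ E]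

def nonnegCombinations (v : ι → E) : Set E :=
  {x | ∃ t : ι → ℝ, 0 ≤ t ∧ ∑ i, t i • v i = x}

lemma zero_mem_nonnegCombinations (v : ι → E) : 0 ∈ nonnegCombinations v :=
  ⟨0, le_rfl, by simp⟩

lemma mem_nonnegCombinations_self [DecidableEq ι] (v : ι → E) (i : ι) :
    v i ∈ nonnegCombinations v :=
  ⟨Pi.single i 1, Pi.single_nonneg.mpr zero_le_one, by simp [Pi.single_apply]⟩

lemma smul_add_smul_mem_nonnegCombinations {v : ι → E} {x y : E}
    (hx : x ∈ nonnegCombinations v) (hy : y ∈ nonnegCombinations v) {a b : ℝ}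
    (ha : 0 ≤ a) (hb : 0 ≤ b) : a • x + b • y ∈ nonnegCombinations v := by
  obtain ⟨t, ht, rfl⟩ := hx
  obtain ⟨s, hs, rfl⟩ := hy
  refine ⟨a • t + b • s, add_nonneg (smul_nonneg ha ht) (smul_nonneg hb hs), ?_⟩
  simp [add_smul, mul_smul, sum_add_distrib, smul_sum]

lemma exists_sum_smul_eq_zero_of_not_linearIndependent {v : ι → E}
    (hv : ¬LinearIndependent ℝ v) : ∃ c : ι → ℝ, ∑ i, c i • v i = 0 ∧ ∃ i, 0 < c i := by
  obtain ⟨g, hg, i, hi⟩ := Fintype.not_linearIndependent_iff.mp hv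
  rcases hi.lt_or_gt with hneg | hpos
  · exact ⟨-g, by simp [hg], i, neg_pos.mpr hneg⟩
  · exact ⟨g, hg, i, hpos⟩

lemma exists_nonneg_sum_smul_eq_with_zero_coeff {v : ι → E} {c t : ι → ℝ}
    (hc : ∑ i, c i • v i = 0) (hcpos : ∃ i, 0 < c i) (ht : 0 ≤ t) :
    ∃ p, ∃ t' : ι → ℝ, 0 ≤ t' ∧ t' p = 0 ∧ ∑ i, t' i • v i = ∑ i, t i • v i := by
  classical
  obtain ⟨i₀, hi₀⟩ := hcpos
  obtain ⟨p, hp, hmin⟩ := exists_min_image {i | 0 < c i} (fun i => t i / c i) ⟨i₀, by simpa⟩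
  rw [mem_filter_univ] at hp
  -- the largest step along `-c` that keeps all coefficients nonnegative
  set s := t p / c p
  refine ⟨p, t - s • c, fun i => ?_, ?_, ?_⟩
  · rcases lt_or_ge 0 (c i) with hci | hci
    · have : s * c i ≤ t i := (le_div_iff₀ hci).mp (hmin i (by simpa))
      simpa using this
    · have : s * c i ≤ 0 := mul_nonpos_of_nonneg_of_nonpos (div_nonneg (ht p) hp.le) hci
      simpa using this.trans (ht i)
  · simp [s, div_mul_cancel₀ _ hp.ne']
  · simp [sub_smul, sum_sub_distrib, mul_smul, ← smul_sum, hc]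

lemma nonnegCombinations_eq_iUnion_of_not_linearIndependent [DecidableEq ι] {v : ι → E}
    (hv : ¬LinearIndependent ℝ v) :
    nonnegCombinations v = ⋃ p, nonnegCombinations fun i : {i // i ≠ p} => v i.1 := by
  ext x
  simp only [Set.mem_iUnion]
  constructor
  · rintro ⟨t, ht, rfl⟩
    obtain ⟨c, hc, hcpos⟩ := exists_sum_smul_eq_zero_of_not_linearIndependent hv
    obtain ⟨p, t', ht', hp, hsum⟩ := exists_nonneg_sum_smul_eq_with_zero_coeff hc hcpos ht
    refine ⟨p, fun i => t' i, fun i => ht' i, ?_⟩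
    rw [← hsum, Fintype.sum_eq_add_sum_subtype_ne _ p, hp, zero_smul, zero_add]
  · rintro ⟨p, s, hs, rfl⟩
    refine ⟨fun i => if h : i = p then 0 else s ⟨i, h⟩, fun i => ?_, ?_⟩
    · dsimp only
      split_ifs
      exacts [le_rfl, hs _]
    · rw [Fintype.sum_eq_add_sum_subtype_ne _ p]
      simp only [dite_true, zero_smul, zero_add]
      exact sum_congr rfl fun i _ => by rw [dif_neg i.2]

variable [TopologicalSpace E] [IsTopologicalAddGroup E] [ContinuousSMul ℝ E] [T2Space E]

lemma isClosed_nonnegCombinations_of_linearIndependent {v : ι → E}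
    (hv : LinearIndependent ℝ v) : IsClosed (nonnegCombinations v) := by
  have hemb := LinearMap.isClosedEmbedding_of_injective
    (LinearMap.ker_eq_bot.mpr (linearIndependent_iff_injective_fintypeLinearCombination.mp hv))
  have : nonnegCombinations v = Fintype.linearCombination ℝ v '' Set.Ici 0 := by
    ext x
    simp [nonnegCombinations, Fintype.linearCombination_apply]
  rw [this]
  exact hemb.isClosedMap _ isClosed_Ici

theorem isClosed_nonnegCombinations (v : ι → E) : IsClosed (nonnegCombinations v) := by
  classical
  induction hn : Fintype.card ι using Nat.strong_induction_on generalizing ι with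
  | _ n ih =>
  by_cases hv : LinearIndependent ℝ v
  · exact isClosed_nonnegCombinations_of_linearIndependent hv
  rw [nonnegCombinations_eq_iUnion_of_not_linearIndependent hv]
  refine isClosed_iUnion_of_finite fun p => ih _ ?_ _ rfl
  exact hn ▸ Fintype.card_subtype_lt (p := (· ≠ p)) (x := p) (by simp)

def nonnegCombinationsCone (v : ι → E) : ProperCone ℝ E where
  toSubmodule := PointedCone.ofConeComb (nonnegCombinations v) ⟨0, zero_mem_nonnegCombinations v⟩
    fun _ hx _ hy _ ha _ hb => smul_add_smul_mem_nonnegCombinations hx hy ha hb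
  isClosed' := isClosed_nonnegCombinations v

theorem mem_nonnegCombinations_iff [LocallyConvexSpace ℝ E] (v : ι → E) (w : E) :
    w ∈ nonnegCombinations v ↔ ∀ f : StrongDual ℝ E, (∀ i, 0 ≤ f (v i)) → 0 ≤ f w := by
  classical
  constructor
  · rintro ⟨t, ht, rfl⟩ f hf
    simpa using sum_nonneg fun i _ => mul_nonneg (ht i) (hf i)
  · intro h
    by_contra hw
    obtain ⟨f, hf, hfw⟩ := (nonnegCombinationsCone v).hyperplane_separation_point hw
    exact hfw.not_ge (h f fun i => hf _ (mem_nonnegCombinations_self v i))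

end Cone

theorem mem_nonnegCombinations_iff_dotProduct {ι κ : Type*} [Fintype ι] [Fintype κ]
    [DecidableEq κ] (v : ι → κ → ℝ) (w : κ → ℝ) :
    w ∈ nonnegCombinations v ↔ ∀ y : κ → ℝ, (∀ i, 0 ≤ v i ⬝ᵥ y) → 0 ≤ w ⬝ᵥ y := by
  rw [mem_nonnegCombinations_iff]
  constructor
  · intro h y
    simpa [dotProduct_comm _ y] using h (LinearMap.toContinuousLinearMap (dotProductEquiv ℝ κ y))
  · intro h f hf
    have hfy : ∀ x, f x = x ⬝ᵥ fun j => f (Pi.single j 1) := fun x => by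
      conv_lhs => rw [pi_eq_sum_univ' x]
      simp only [map_sum, map_smul, smul_eq_mul, dotProduct]
    rw [hfy]
    exact h _ fun i => hfy (v i) ▸ hf i

section Affine

variable {ι κ : Type*} [Fintype κ]

def Entails (b : ι → ℝ) (A : ι → κ → ℝ) (c₀ : ℝ) (c : κ → ℝ) : Prop :=
  ∀ x, (∀ i, 0 ≤ b i + A i ⬝ᵥ x) → 0 ≤ c₀ + c ⬝ᵥ x

variable {b : ι → ℝ} {A : ι → κ → ℝ} {c₀ : ℝ} {c : κ → ℝ}

lemma Entails.homogenize (h : Entails b A c₀ c) {x₀ : κ → ℝ} (hx₀ : ∀ i, 0 ≤ b i + A i ⬝ᵥ x₀)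
    {τ : ℝ} {z : κ → ℝ} (hτ : 0 ≤ τ) (hz : ∀ i, 0 ≤ b i * τ + A i ⬝ᵥ z) :
    0 ≤ c₀ * τ + c ⬝ᵥ z := by
  have scaled : ∀ ε > 0, ∀ (a₀ : ℝ) (a : κ → ℝ),
      (τ + ε) * (a₀ + a ⬝ᵥ ((τ + ε)⁻¹ • (ε • x₀ + z))) =
        ε * (a₀ + a ⬝ᵥ x₀) + (a₀ * τ + a ⬝ᵥ z) := by
    intro ε hε a₀ a
    rw [dotProduct_smul, dotProduct_add, dotProduct_smul, smul_eq_mul, smul_eq_mul]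
    field_simp
    ring
  have key : ∀ ε > 0, 0 ≤ ε * (c₀ + c ⬝ᵥ x₀) + (c₀ * τ + c ⬝ᵥ z) := by
    intro ε hε
    rw [← scaled ε hε]
    refine mul_nonneg (by linarith) (h _ fun i => ?_)
    nlinarith [scaled ε hε (b i) (A i), hx₀ i, hz i]
  set K := c₀ + c ⬝ᵥ x₀
  have hK : 0 ≤ K := h x₀ hx₀
  refine le_of_forall_pos_le_add fun ε hε => ?_
  have hKε : ε / (K + 1) * K ≤ ε := by
    rw [div_mul_eq_mul_div, div_le_iff₀ (by linarith)]
    nlinarith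
  linarith [key (ε / (K + 1)) (by positivity)]

lemma entails_iff_homogenized (hsat : ∃ x₀ : κ → ℝ, ∀ i, 0 ≤ b i + A i ⬝ᵥ x₀) :
    Entails b A c₀ c ↔ ∀ (τ : ℝ) (z : κ → ℝ), 0 ≤ τ → (∀ i, 0 ≤ b i * τ + A i ⬝ᵥ z) →
      0 ≤ c₀ * τ + c ⬝ᵥ z := by
  obtain ⟨x₀, hx₀⟩ := hsat
  refine ⟨fun h τ z hτ hz => h.homogenize hx₀ hτ hz, fun h x hx => ?_⟩
  simpa using h 1 x zero_le_one (by simpa using hx)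

end Affine

section Homogenization

variable {m r : ℕ} {b : Fin m → ℝ} {A : Fin m → Fin r → ℝ} {c₀ : ℝ} {c : Fin r → ℝ}

lemma Fin.cons_dotProduct_cons {n : ℕ} (x : ℝ) (v : Fin n → ℝ) (y : ℝ) (w : Fin n → ℝ) :
    (Fin.cons x v : Fin (n + 1) → ℝ) ⬝ᵥ Fin.cons y w = x * y + v ⬝ᵥ w :=
  Matrix.cons_dotProduct_cons x v y w

/-- The rows of the homogenized system `0 ≤ τ`, `0 ≤ b i * τ + A i ⬝ᵥ z` in the unknown
`Fin.cons τ z`; the coefficient of the first row is the slack `y₀`. -/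
def homogenizedRows (b : Fin m → ℝ) (A : Fin m → Fin r → ℝ) : Fin (m + 1) → Fin (r + 1) → ℝ :=
  Fin.cons (Fin.cons 1 0) fun i => Fin.cons (b i) (A i)

lemma cons_mem_nonnegCombinations_homogenizedRows_iff_forall :
    Fin.cons c₀ c ∈ nonnegCombinations (homogenizedRows b A) ↔
      ∀ (τ : ℝ) (z : Fin r → ℝ), 0 ≤ τ → (∀ i, 0 ≤ b i * τ + A i ⬝ᵥ z) →
        0 ≤ c₀ * τ + c ⬝ᵥ z := by
  simp [mem_nonnegCombinations_iff_dotProduct, Fin.forall_fin_succ_pi, Fin.forall_fin_succ,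
    homogenizedRows, Fin.cons_dotProduct_cons]

lemma cons_mem_nonnegCombinations_homogenizedRows_iff_exists :
    Fin.cons c₀ c ∈ nonnegCombinations (homogenizedRows b A) ↔
      ∃ (y₀ : ℝ) (y : Fin m → ℝ), 0 ≤ y₀ ∧ (∀ i, 0 ≤ y i) ∧
        c₀ = y₀ + ∑ i, y i * b i ∧ ∀ j, c j = ∑ i, y i * A i j := by
  simp only [nonnegCombinations, Pi.le_def, Pi.zero_apply, Fin.forall_fin_succ, homogenizedRows,
    Fin.sum_univ_succ, Fin.cons_zero, Fin.cons_succ, funext_iff, Pi.add_apply, Pi.smul_apply,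
    smul_eq_mul, Finset.sum_apply, mul_one, mul_zero, zero_add, Fin.exists_fin_succ_pi,
    Set.mem_ofPred_eq, exists_and_left]
  exact ⟨fun ⟨a, v, ⟨ha, hv⟩, h0, hj⟩ => ⟨a, ha, v, hv, h0.symm, fun j => (hj j).symm⟩,
    fun ⟨a, ha, v, hv, h0, hj⟩ => ⟨a, v, ⟨ha, hv⟩, h0.symm, fun j => (hj j).symm⟩⟩

end Homogenization

/-- Farkas' Lemma: a satisfiable system of affine inequalities
`bᵢ + Σⱼ Aᵢⱼ xⱼ ≥ 0` entails the affine inequality `c₀ + Σⱼ cⱼ xⱼ ≥ 0`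
iff there are nonnegative reals `y₀, y₁, …, y_m` with
`c₀ = y₀ + Σᵢ yᵢ bᵢ` and `cⱼ = Σᵢ yᵢ Aᵢⱼ` for each `j`. -/
theorem farkas_lemma {r m : ℕ} (b : Fin m → ℝ) (A : Fin m → Fin r → ℝ)
    (c₀ : ℝ) (c : Fin r → ℝ)
    (hsat : ∃ x : Fin r → ℝ, ∀ i, 0 ≤ b i + ∑ j, A i j * x j) :
    (∀ x : Fin r → ℝ, (∀ i, 0 ≤ b i + ∑ j, A i j * x j) →
        0 ≤ c₀ + ∑ j, c j * x j) ↔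
      ∃ (y₀ : ℝ) (y : Fin m → ℝ), 0 ≤ y₀ ∧ (∀ i, 0 ≤ y i) ∧
        c₀ = y₀ + ∑ i, y i * b i ∧ ∀ j, c j = ∑ i, y i * A i j := by
  change Entails b A c₀ c ↔ _
  rw [entails_iff_homogenized hsat, ← cons_mem_nonnegCombinations_homogenizedRows_iff_forall,
    cons_mem_nonnegCombinations_homogenizedRows_iff_exists]
end

section
/- An unsatisfiability criterion for affine systems: a system Φ of affine inequalities {gᵢ ≥ 0} over ℝ^r is unsatisfiable if and only if −1 can be written as y₀ + Σᵢ yᵢ·gᵢ with all yᵢ ≥ 0 (as an identity of affine polynomials). -/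
/-!
Fourier–Motzkin elimination. Let `a` be the coefficient column of the last variable. Keep the
rows with `aᵢ = 0` and, for every pair `aₚ > 0 > a_q`, add the row `-a_q • gₚ + aₚ • g_q`, in which
the last variable cancels. Every new row is a nonnegative combination of old ones, and a solution
of the new system extends to one of the old system: the rows with `aₚ > 0` give lower bounds on
the last coordinate, those with `a_q < 0` give upper bounds, and the new rows say exactly that
each lower bound is at most each upper bound. By induction on the number of variables, an
infeasible system therefore has a Farkas certificate `y ≥ 0` with `yA = 0` and `y ⬝ b < 0` (with
no variables left, some `bᵢ < 0`), and rescaling `y` gives `-1 = Σᵢ yᵢ gᵢ`. Conversely, at a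
solution the right-hand side is nonnegative.
-/

open Finset Matrix

theorem Finset.exists_le_le_of_forall_le {ι α : Type*} [LinearOrder α] [Nonempty α]
    (s t : Finset ι) (lo hi : ι → α) (h : ∀ i ∈ s, ∀ j ∈ t, lo i ≤ hi j) :
    ∃ c, (∀ i ∈ s, lo i ≤ c) ∧ ∀ j ∈ t, c ≤ hi j := by
  rcases s.eq_empty_or_nonempty with rfl | hs
  · rcases t.eq_empty_or_nonempty with rfl | ht
    · exact ⟨Classical.arbitrary α, by simp, by simp⟩
    · exact ⟨t.inf' ht hi, by simp, fun j hj => inf'_le _ hj⟩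
  · exact ⟨s.sup' hs lo, fun i hi => le_sup' _ hi,
      fun j hj => sup'_le _ _ fun i hi => h i hi j hj⟩

theorem exists_forall_nonneg_add_mul {ι : Type*} [Fintype ι] (f a : ι → ℝ)
    (hzero : ∀ i, a i = 0 → 0 ≤ f i)
    (hpair : ∀ p q, 0 < a p → a q < 0 → 0 ≤ -a q * f p + a p * f q) :
    ∃ t : ℝ, ∀ i, 0 ≤ f i + a i * t := by
  classical
  obtain ⟨t, hpos, hneg⟩ := Finset.exists_le_le_of_forall_le
    {p | 0 < a p} {q | a q < 0} (fun i => -f i / a i) (fun i => -f i / a i) <| by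
      simp only [mem_filter, mem_univ, true_and]
      intro p hp q hq
      rw [div_le_iff₀ hp, div_mul_eq_mul_div, le_div_iff_of_neg hq]
      linarith [hpair p q hp hq]
  refine ⟨t, fun i => ?_⟩
  rcases lt_trichotomy (a i) 0 with hi | hi | hi
  · have := hneg i (by simpa)
    rw [le_div_iff_of_neg hi] at this
    linarith
  · simp [hi, hzero i hi]
  · have := hpos i (by simpa)
    rw [div_le_iff₀ hi] at this
    linarith

theorem Matrix.mulVec_snoc {m : Type*} {r : ℕ} (A : Matrix m (Fin (r + 1)) ℝ) (x : Fin r → ℝ)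
    (t : ℝ) : A *ᵥ Fin.snoc x t = A.submatrix id Fin.castSucc *ᵥ x + t • Aᵀ (Fin.last r) := by
  ext i
  simp [mulVec, dotProduct, Fin.sum_univ_castSucc, mul_comm t]

section FourierMotzkin

variable {ι : Type*} [DecidableEq ι]

abbrev FourierMotzkinIndex (a : ι → ℝ) : Type _ :=
  {i // a i = 0} ⊕ {i // 0 < a i} × {i // a i < 0}

def fourierMotzkinMatrix (a : ι → ℝ) : Matrix (FourierMotzkinIndex a) ι ℝ :=
  Matrix.of <| Sum.elim (fun i => Pi.single i.1 1)
    fun pq => Pi.single pq.1.1 (-a pq.2.1) + Pi.single pq.2.1 (a pq.1.1)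

variable (a : ι → ℝ)

theorem fourierMotzkinMatrix_nonneg (k : FourierMotzkinIndex a) (i : ι) :
    0 ≤ fourierMotzkinMatrix a k i := by
  rcases k with i₀ | ⟨p, q⟩
  · simp only [fourierMotzkinMatrix, of_apply, Sum.elim_inl, Pi.single_apply]
    split <;> norm_num
  · have hp := p.2
    have hq := q.2
    simp only [fourierMotzkinMatrix, of_apply, Sum.elim_inr, Pi.add_apply, Pi.single_apply]
    split <;> split <;> linarith

variable [Fintype ι]

@[simp]
theorem fourierMotzkinMatrix_mulVec_inl (v : ι → ℝ) (i : {i // a i = 0}) :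
    (fourierMotzkinMatrix a *ᵥ v) (.inl i) = v i := by
  simp [fourierMotzkinMatrix, mulVec]

@[simp]
theorem fourierMotzkinMatrix_mulVec_inr (v : ι → ℝ) (pq : {i // 0 < a i} × {i // a i < 0}) :
    (fourierMotzkinMatrix a *ᵥ v) (.inr pq) = -a pq.2 * v pq.1 + a pq.1 * v pq.2 := by
  change (Pi.single pq.1.1 (-a pq.2.1) + Pi.single pq.2.1 (a pq.1.1)) ⬝ᵥ v = _
  rw [add_dotProduct, single_dotProduct, single_dotProduct]

theorem fourierMotzkinMatrix_mulVec_self : fourierMotzkinMatrix a *ᵥ a = 0 := by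
  ext (⟨i, hi⟩ | ⟨p, q⟩)
  · simpa using hi
  · simp only [fourierMotzkinMatrix_mulVec_inr, Pi.zero_apply]
    ring

theorem exists_forall_nonneg_add_mul_of_nonneg_fourierMotzkinMatrix_mulVec {f : ι → ℝ}
    (hf : 0 ≤ fourierMotzkinMatrix a *ᵥ f) : ∃ t : ℝ, ∀ i, 0 ≤ f i + a i * t :=
  exists_forall_nonneg_add_mul f a (fun i hi => by simpa using hf (.inl ⟨i, hi⟩))
    fun p q hp hq => by simpa using hf (.inr (⟨p, hp⟩, ⟨q, hq⟩))

end FourierMotzkin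

theorem exists_farkas_certificate {ι : Type*} [Fintype ι] {r : ℕ} (b : ι → ℝ)
    (A : Matrix ι (Fin r) ℝ) (h : ¬ ∃ x, 0 ≤ b + A *ᵥ x) :
    ∃ y : ι → ℝ, 0 ≤ y ∧ y ᵥ* A = 0 ∧ y ⬝ᵥ b < 0 := by
  classical
  induction r generalizing ι with
  | zero =>
    push Not at h
    obtain ⟨i, hi⟩ : ∃ i, b i < 0 := by simpa [Pi.le_def] using h 0
    exact ⟨Pi.single i 1, by simp [Pi.single_nonneg], funext (·.elim0), by simpa⟩
  | succ r ih =>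
    set a := Aᵀ (Fin.last r)
    set C := fourierMotzkinMatrix a
    set B := A.submatrix id Fin.castSucc
    have h_elim : ¬ ∃ x, 0 ≤ C *ᵥ b + (C * B) *ᵥ x := by
      rintro ⟨x, hx⟩
      rw [← mulVec_mulVec, ← mulVec_add] at hx
      obtain ⟨t, ht⟩ := exists_forall_nonneg_add_mul_of_nonneg_fourierMotzkinMatrix_mulVec a hx
      refine h ⟨Fin.snoc x t, fun i => ?_⟩
      simpa [B, a, mulVec_snoc, ← add_assoc, mul_comm t] using ht i
    obtain ⟨z, hz, hzB, hzb⟩ := ih (C *ᵥ b) (C * B) h_elim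
    refine ⟨z ᵥ* C, fun i => sum_nonneg fun k _ => mul_nonneg (hz k)
      (fourierMotzkinMatrix_nonneg a k i), ?_, by rwa [← dotProduct_mulVec]⟩
    rw [vecMul_vecMul]
    ext j
    refine Fin.lastCases ?_ (fun j => congrFun hzB j) j
    change z ⬝ᵥ (C *ᵥ a) = 0
    rw [fourierMotzkinMatrix_mulVec_self, dotProduct_zero]

theorem not_exists_nonneg_add_mulVec_iff {ι : Type*} [Fintype ι] {r : ℕ} (b : ι → ℝ)
    (A : Matrix ι (Fin r) ℝ) :
    (¬ ∃ x, 0 ≤ b + A *ᵥ x) ↔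
      ∃ (y₀ : ℝ) (y : ι → ℝ), 0 ≤ y₀ ∧ 0 ≤ y ∧ ∀ x, -1 = y₀ + y ⬝ᵥ (b + A *ᵥ x) := by
  constructor
  · intro h
    obtain ⟨y, hy, hyA, hyb⟩ := exists_farkas_certificate b A h
    refine ⟨0, (-(y ⬝ᵥ b))⁻¹ • y, le_rfl, smul_nonneg (inv_nonneg.2 (neg_nonneg.2 hyb.le)) hy,
      fun x => ?_⟩
    rw [smul_dotProduct, dotProduct_add, dotProduct_mulVec, hyA, zero_dotProduct, add_zero,
      smul_eq_mul, zero_add, inv_mul_eq_div, div_neg, div_self hyb.ne]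
  · rintro ⟨y₀, y, hy₀, hy, hid⟩ ⟨x, hx⟩
    linarith [hid x, dotProduct_nonneg_of_nonneg hy hx]

/-- Unsatisfiability criterion for affine systems: the system
`bᵢ + Σⱼ Aᵢⱼ xⱼ ≥ 0` (i = 1,…,m) is unsatisfiable iff `−1` can be written as
`y₀ + Σᵢ yᵢ · gᵢ` with all `yᵢ ≥ 0`, as an identity of affine polynomials. -/
theorem affine_unsat_iff {r m : ℕ} (b : Fin m → ℝ) (A : Fin m → Fin r → ℝ) :
    (¬ ∃ x : Fin r → ℝ, ∀ i, 0 ≤ b i + ∑ j, A i j * x j) ↔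
      ∃ (y₀ : ℝ) (y : Fin m → ℝ), 0 ≤ y₀ ∧ (∀ i, 0 ≤ y i) ∧
        ∀ x : Fin r → ℝ,
          (-1 : ℝ) = y₀ + ∑ i, y i * (b i + ∑ j, A i j * x j) :=
  not_exists_nonneg_add_mulVec_iff b A
end

section
/- Unsatisfiability certificate with slack variables (soundness): let g₁,...,g_k ∈ ℝ[x₁,...,xₙ] with associated relation symbols ⋈ᵢ ∈ {>, ≥}, and let g̃ᵢ = gᵢ − wᵢ². Suppose for some index j with ⋈ⱼ equal to >, there exist α ∈ ℕ, polynomials h₁,...,h_k ∈ ℝ[x₁,...,xₙ,w₁,...,w_k], and a sum of squares h₀ such that wⱼ^{4α} = Σᵢ hᵢ·g̃ᵢ − h₀. Then the system {g₁ ⋈₁ 0, ..., g_k ⋈_k 0} has no solution in ℝⁿ. -/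
/-!
Evaluate the certificate at `(x, w)` with `wᵢ = √(gᵢ(x))`, which is possible because a
solution `x` has every `gᵢ(x) ≥ 0`. There every slack polynomial `g̃ᵢ` vanishes, so the
identity becomes `wⱼ^{4α} = -h₀(x, w) ≤ 0`, while `gⱼ(x) > 0` makes `wⱼ^{4α} > 0`.
-/

open MvPolynomial

def IsSOS {σ : Type*} (p : MvPolynomial σ ℝ) : Prop :=
  ∃ (k : ℕ) (g : Fin k → MvPolynomial σ ℝ), p = ∑ i, (g i) ^ 2

theorem IsSOS.eval_nonneg {σ : Type*} {p : MvPolynomial σ ℝ} (hp : IsSOS p) (y : σ → ℝ) :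
    0 ≤ eval y p := by
  obtain ⟨m, g, rfl⟩ := hp
  simp only [map_sum, map_pow]
  exact Finset.sum_nonneg fun i _ => sq_nonneg _

theorem eval_nonpos_of_eq_sum_mul_sub_sos {σ ι : Type*} [Fintype ι] {p h₀ : MvPolynomial σ ℝ}
    {h f : ι → MvPolynomial σ ℝ} (hp : p = ∑ i, h i * f i - h₀) (hh₀ : IsSOS h₀)
    {y : σ → ℝ} (hy : ∀ i, eval y (f i) = 0) : eval y p ≤ 0 := by
  have hsum : eval y (∑ i, h i * f i) = 0 := by
    simp only [map_sum, map_mul, hy, mul_zero, Finset.sum_const_zero]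
  rw [hp, map_sub, hsum, zero_sub, neg_nonpos]
  exact hh₀.eval_nonneg y

theorem eval_sumElim_rename_inl_sub_X_inr_sq {σ ι : Type*} (x : σ → ℝ) (w : ι → ℝ)
    (g : MvPolynomial σ ℝ) (i : ι) :
    eval (Sum.elim x w) (rename Sum.inl g - X (Sum.inr i) ^ 2) = eval x g - w i ^ 2 := by
  simp [eval_rename, Function.comp_def]

/-- Unsatisfiability certificate with slack variables (soundness): with
`g̃ᵢ = gᵢ − wᵢ²` and strictness flags `s` (`s i = true` meaning `gᵢ > 0`),
if for some index `j` with a strict inequality there are `α`, polynomials `hᵢ`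
and a sum of squares `h₀` with `wⱼ^{4α} = Σᵢ hᵢ·g̃ᵢ − h₀`, then the system
`{gᵢ ⋈ᵢ 0}` has no solution in `ℝⁿ`. -/
theorem slack_unsat_soundness {n k : ℕ} (G : Fin k → MvPolynomial (Fin n) ℝ)
    (s : Fin k → Bool) (j : Fin k) (hj : s j = true) (α : ℕ)
    (h : Fin k → MvPolynomial (Fin n ⊕ Fin k) ℝ)
    (h₀ : MvPolynomial (Fin n ⊕ Fin k) ℝ) (hh₀ : IsSOS h₀)
    (hrep : (X (Sum.inr j : Fin n ⊕ Fin k)) ^ (4 * α) =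
      (∑ i, h i * (rename Sum.inl (G i) - (X (Sum.inr i : Fin n ⊕ Fin k)) ^ 2))
        - h₀) :
    ¬ ∃ x : Fin n → ℝ, ∀ i,
        if s i then 0 < eval x (G i) else 0 ≤ eval x (G i) := by
  rintro ⟨x, hx⟩
  have hG : ∀ i, 0 ≤ eval x (G i) := fun i => by
    have := hx i
    split_ifs at this <;> linarith
  set w : Fin k → ℝ := fun i => √(eval x (G i))
  have hslack : ∀ i, eval (Sum.elim x w) (rename Sum.inl (G i) - X (Sum.inr i) ^ 2) = 0 :=
    fun i => by rw [eval_sumElim_rename_inl_sub_X_inr_sq, Real.sq_sqrt (hG i), sub_self]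
  have hle : w j ^ (4 * α) ≤ 0 := by
    simpa using eval_nonpos_of_eq_sum_mul_sub_sos hrep hh₀ hslack
  have hwj : 0 < w j := Real.sqrt_pos.mpr (by simpa [hj] using hx j)
  exact (pow_pos hwj _).not_ge hle
end
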